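/- arXiv:1008.0142 — 3 statements merged into one kernel-verified Lean document; each statement's English description precedes it below -/
import Mathlib

section
/- Let p be a prime, C a cyclic group of p-power order, and P a finite group of order prime to p acting on C by automorphisms. Let P₁ be the kernel of the action map P → Aut(C). Then for any nontrivial character χ : C → ℂˣ, the stabiliser of χ under the action (g·χ)(h) = χ(g⁻¹hg) of P on characters of C is exactly P₁. -/
lemma aux_dvd (p : ℕ) (hp : p.Prime) (n t : ℕ) (x : ℤ)
    (hx : (p:ℤ) ∣ x - 1) (ht : ¬ p ∣ t) (h : (p:ℤ)^n ∣ x^t - 1) :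
    (p:ℤ)^n ∣ x - 1 := by
  set S : ℤ := ∑ i ∈ Finset.range t, x ^ i with hS
  have hgeom : S * (x - 1) = x ^ t - 1 := geom_sum_mul x t
  have hSmod : ¬ (p:ℤ) ∣ S := by
    intro hdvd
    have h1 : ((x : ZMod p)) = 1 := by
      have : ((x - 1 : ℤ) : ZMod p) = 0 := by
        exact_mod_cast (ZMod.intCast_zmod_eq_zero_iff_dvd _ p).mpr hx
      push_cast at this
      linear_combination this
    have h2 : ((S : ZMod p)) = (t : ZMod p) := by
      push_cast [hS, h1]
      simp
    have h3 : ((S : ZMod p)) = 0 := (ZMod.intCast_zmod_eq_zero_iff_dvd _ p).mpr hdvd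
    rw [h3] at h2
    exact ht ((ZMod.natCast_eq_zero_iff t p).mp h2.symm)
  have hprime : Prime (p : ℤ) := Nat.prime_iff_prime_int.mp hp
  have hcop : IsCoprime ((p:ℤ)^n) S :=
    ((hprime.coprime_iff_not_dvd).mpr hSmod).pow_left
  exact hcop.dvd_of_dvd_mul_left (hgeom ▸ h)

/-- For a cyclic group `C` of `p`-power order with a prime-to-`p` group `P`
acting on it by automorphisms, the stabiliser of any nontrivial character
`χ : C → ℂˣ` (under `(g·χ)(h) = χ(g⁻¹hg)`, equivalently the condition
`∀ h, χ(φ g h) = χ h`) is exactly `P₁ = ker(P → Aut C)`. -/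
theorem stmt_0 (p : ℕ) (hp : p.Prime) (n : ℕ) (hn : 1 ≤ n)
    (C : Type*) [CommGroup C] [Fintype C] (hC : IsCyclic C)
    (hcard : Fintype.card C = p ^ n)
    (P : Type*) [Group P] [Fintype P] (hP : Nat.Coprime (Fintype.card P) p)
    (φ : P →* MulAut C)
    (χ : C →* ℂˣ) (hχ : χ ≠ 1) :
    ∀ g : P, (∀ h : C, χ (φ g h) = χ h) ↔ g ∈ φ.ker := by
  obtain ⟨c, hc⟩ := hC.exists_generator
  have hordc : orderOf c = p ^ n := by
    rw [orderOf_eq_card_of_forall_mem_zpowers hc, Nat.card_eq_fintype_card, hcard]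
  intro g
  constructor
  · intro hg
    -- χ c ≠ 1
    have hχc : χ c ≠ 1 := by
      intro h1
      apply hχ
      ext x
      obtain ⟨k, hk⟩ := hc x
      rw [← hk]
      simp [h1]
    -- get m with φ g c = c ^ m
    obtain ⟨m, hm⟩ : ∃ m : ℕ, φ g c = c ^ m := by
      have := hc (φ g c)
      rw [← mem_powers_iff_mem_zpowers] at this
      obtain ⟨m, hm⟩ := this
      exact ⟨m, hm.symm⟩
    -- order of χ c divides p^n and is ≠ 1, so p ∣ orderOf (χ c)
    have hdvd : orderOf (χ c) ∣ p ^ n := by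
      apply orderOf_dvd_of_pow_eq_one
      rw [← map_pow, ← hordc, pow_orderOf_eq_one, map_one]
    have hne1 : orderOf (χ c) ≠ 1 := fun h => hχc (orderOf_eq_one_iff.mp h)
    have hpd : p ∣ orderOf (χ c) := by
      obtain ⟨k, hk, hek⟩ := (Nat.dvd_prime_pow hp).mp hdvd
      rcases Nat.eq_zero_or_pos k with h0 | h1
      · exact absurd (by simp [h0, hek]) hne1
      · exact hek ▸ dvd_pow_self p h1.ne'
    -- m ≡ 1 mod orderOf (χ c)
    have hm1 : m ≡ 1 [MOD orderOf (χ c)] := by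
      rw [← pow_eq_pow_iff_modEq]
      simpa [map_pow, hm] using hg c
    have hmp : m ≡ 1 [MOD p] := hm1.of_dvd hpd
    -- t = orderOf (φ g)
    set t := orderOf (φ g) with htdef
    have htP : ¬ p ∣ t := by
      intro hdvd
      have h1 : t ∣ Fintype.card P := (orderOf_map_dvd φ g).trans (orderOf_dvd_card)
      have : p ∣ Nat.gcd (Fintype.card P) p := Nat.dvd_gcd (hdvd.trans h1) dvd_rfl
      rw [hP] at this
      exact hp.one_lt.ne' (Nat.dvd_one.mp this)
    -- (φ g)^j c = c^(m^j)
    have hiter : ∀ j : ℕ, ((φ g) ^ j) c = c ^ (m ^ j) := by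
      intro j
      induction j with
      | zero => simp
      | succ j ih =>
        rw [pow_succ, MulAut.mul_apply, hm, map_pow, ih, ← pow_mul, ← pow_succ]
    have hmt : m ^ t ≡ 1 [MOD p ^ n] := by
      rw [← hordc, ← pow_eq_pow_iff_modEq]
      have := hiter t
      rw [pow_orderOf_eq_one] at this
      simpa using this.symm
    -- conclude m ≡ 1 mod p^n
    have key : m ≡ 1 [MOD p ^ n] := by
      rw [Nat.ModEq.comm, Nat.modEq_iff_dvd] at hmt hmp ⊢
      have h1 : (p:ℤ) ∣ (m:ℤ) - 1 := by exact_mod_cast hmp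
      have h2 : (p:ℤ)^n ∣ (m:ℤ)^t - 1 := by push_cast at hmt ⊢; exact hmt
      have := aux_dvd p hp n t (m:ℤ) h1 htP h2
      push_cast
      exact this
    have hfix : φ g c = c := by
      rw [hm]
      have := (pow_eq_pow_iff_modEq (x := c) (n := m) (m := 1)).mpr (hordc ▸ key)
      simpa using this
    rw [MonoidHom.mem_ker]
    ext x
    obtain ⟨k, hk⟩ := hc x
    rw [← hk]
    simp [map_zpow, hfix]
  · intro hg h
    rw [MonoidHom.mem_ker] at hg
    rw [hg]
    rfl
end

section
/- Let R be a commutative ring, p a prime, and r, s ∈ R with p·R ∋ (rᵖ − φ(r)) for a ring endomorphism φ of R (i.e. rᵖ ≡ φ(r) mod pR). Then for every t ≥ 1, r^{p^t} ≡ φ(r^{p^{t−1}}) (mod p^t R). -/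
theorem stmt_4_general (R : Type*) [CommRing R] (p : ℕ) (φ : R →+* R) (r : R)
    (h : r ^ p - φ r ∈ Ideal.span {(p : R)}) (t : ℕ) (ht : 1 ≤ t) :
    r ^ p ^ t - φ (r ^ p ^ (t - 1)) ∈ Ideal.span {(p : R) ^ t} := by
  obtain ⟨k, rfl⟩ := Nat.exists_eq_add_of_le' ht
  rw [Ideal.mem_span_singleton] at h ⊢
  have hlift := dvd_sub_pow_of_dvd_sub h k
  rwa [← pow_mul, ← pow_succ', ← map_pow] at hlift

/-- If `rᵖ ≡ φ(r) (mod pR)` for a ring endomorphism `φ` of a commutative ring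
`R`, then `r^{p^t} ≡ φ(r^{p^{t−1}}) (mod p^t R)` for all `t ≥ 1`. -/
theorem stmt_4 (R : Type*) [CommRing R] (p : ℕ) (hp : p.Prime) (φ : R →+* R) (r : R)
    (h : r ^ p - φ r ∈ Ideal.span {(p : R)}) (t : ℕ) (ht : 1 ≤ t) :
    r ^ p ^ t - φ (r ^ p ^ (t - 1)) ∈ Ideal.span {(p : R) ^ t} :=
  stmt_4_general R p φ r h t ht
end

section
/- Let p be a prime and let P be a finite cyclic p-group contained in a finite p-group N such that P ⪇ N and P is not properly contained in any cyclic subgroup of N (i.e., there is no cyclic subgroup P' of N with P'ᵖ = P and P' ≠ P). Then the image of the transfer homomorphism ver : N^{ab} → P is a proper subgroup of P. -/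
/-!
Put `e = |P| / p`. On the cyclic `p`-group `P`, `x ↦ x ^ e` is a homomorphism onto the subgroup of
order `p` whose kernel is the set of non-generators, so it suffices that `(ver y) ^ e = 1` for
every `y`. By the transfer formula, `ver y` is a product of elements `(g⁻¹ y g) ^ k ∈ P`, one for
each `⟨y⟩`-orbit on `N ⧸ P`, `k` being the length of the orbit.

If no conjugate of `y` lies in `P`, no factor generates `P`: otherwise the cyclic group
`⟨g⁻¹ y g⟩` would contain `P`, forcing `g⁻¹ y g ∈ P` by maximality. If some conjugate `h` of `y`
lies in `P`, then `ver y = ver h` and every factor `g⁻¹ h ^ k g` has the same `e`-th power as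
`h ^ k`, because conjugation by the `p`-element `g` fixes the subgroup of order `p` of `P`
pointwise (`a ^ p ^ s ≡ a mod p`). Hence `(ver h) ^ e = (h ^ e) ^ [N : P] = 1`, as `p ∣ [N : P]`.
-/

open Subgroup

namespace MonoidHom

variable {G : Type*} [Group G] {A B : Type*} [CommGroup A] [CommGroup B]

theorem map_conj_of_commGroup (f : G →* A) (g₀ g : G) : f (g₀⁻¹ * g * g₀) = f g := by
  rw [map_mul, map_mul, map_inv, mul_right_comm, inv_mul_cancel, one_mul]

variable {H : Subgroup G} [H.FiniteIndex]

theorem map_transfer (f : A →* B) (ϕ : H →* A) (g : G) :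
    f (ϕ.transfer g) = (f.comp ϕ).transfer g := by
  let := Fintype.ofFinite (Quotient (MulAction.orbitRel (zpowers g) (G ⧸ H)))
  simp only [transfer_eq_prod_quotient_orbitRel_zpowers_quot, map_prod, comp_apply]

theorem transfer_eq_pow_index_of_forall (ϕ : H →* A) (g : G) (a : A)
    (key : ∀ (k : ℕ) (g₀ : G) (hk : g₀⁻¹ * g ^ k * g₀ ∈ H),
      ϕ ⟨g₀⁻¹ * g ^ k * g₀, hk⟩ = a ^ k) :
    ϕ.transfer g = a ^ H.index := by
  let := Fintype.ofFinite (Quotient (MulAction.orbitRel (zpowers g) (G ⧸ H)))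
  rw [transfer_eq_prod_quotient_orbitRel_zpowers_quot, index_eq_sum_minimalPeriod H g,
    ← Finset.prod_pow_eq_pow_sum]
  exact Finset.prod_congr rfl fun q _ => key _ _ _

end MonoidHom

theorem conj_pow_eq_zpow_pow {G : Type*} [Group G] {g z : G} {a : ℤ}
    (h : g⁻¹ * z * g = z ^ a) : ∀ n : ℕ, (g ^ n)⁻¹ * z * g ^ n = z ^ a ^ n
  | 0 => by simp
  | n + 1 =>
    calc (g ^ (n + 1))⁻¹ * z * g ^ (n + 1) = (g ^ n)⁻¹ * (g⁻¹ * z * g) * g ^ n := by group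
      _ = ((g ^ n)⁻¹ * z * g ^ n) ^ a := by
        rw [h]; simpa using (conj_zpow (a := (g ^ n)⁻¹) (b := z) (i := a)).symm
      _ = z ^ a ^ (n + 1) := by rw [conj_pow_eq_zpow_pow h n, ← zpow_mul, pow_succ]

namespace IsPGroup

variable {p : ℕ} [hp : Fact p.Prime] {G : Type*} [Group G]

theorem conj_eq_self_of_pow_prime_eq_one (hG : IsPGroup p G) {g z : G} (hz : z ^ p = 1) {a : ℤ}
    (ha : g⁻¹ * z * g = z ^ a) : g⁻¹ * z * g = z := by
  obtain ⟨s, hs⟩ := hG g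
  have hfix : z ^ a ^ p ^ s = z ^ (1 : ℤ) := by
    rw [← conj_pow_eq_zpow_pow ha, hs]; simp
  have hfermat : a ^ p ^ s ≡ a [ZMOD p] := by
    rw [← ZMod.intCast_eq_intCast_iff]; push_cast; exact ZMod.pow_card_pow _
  have hdvd : (orderOf z : ℤ) ∣ p := Int.natCast_dvd_natCast.mpr (orderOf_dvd_of_pow_eq_one hz)
  rw [zpow_eq_zpow_iff_modEq] at hfix
  rw [ha, zpow_eq_zpow_iff_modEq.mpr ((hfermat.of_dvd hdvd).symm.trans hfix), zpow_one]

theorem orderOf_eq_card_of_pow_ne_one {P : Subgroup G} [Finite P] (hP : IsPGroup p P) {x : G}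
    (hx : x ∈ P) (hne : x ^ (Nat.card P / p) ≠ 1) : orderOf x = Nat.card P := by
  obtain ⟨m, hm⟩ := IsPGroup.iff_card.mp hP
  obtain ⟨i, hi, hio⟩ := (Nat.dvd_prime_pow hp.out).mp (hm ▸ P.orderOf_dvd_natCard hx)
  rw [hio, hm]
  refine congrArg _ (le_antisymm hi (not_lt.mp fun him => hne ?_))
  rw [← orderOf_dvd_iff_pow_eq_one, hio, hm]
  obtain ⟨k, rfl⟩ := Nat.exists_eq_add_of_lt him
  rw [pow_succ, Nat.mul_div_cancel _ hp.out.pos]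
  exact pow_dvd_pow p (Nat.le_add_right i k)

variable [Finite G] {P : Subgroup G}

theorem conj_pow_card_div_eq (hG : IsPGroup p G) (hpP : p ∣ Nat.card P) {x g : G} (hx : x ∈ P)
    (hgx : g⁻¹ * x * g ∈ P) : (g⁻¹ * x * g) ^ (Nat.card P / p) = x ^ (Nat.card P / p) := by
  set e := Nat.card P / p
  have hconj : (g⁻¹ * x * g) ^ e = g⁻¹ * x ^ e * g := by
    simpa using conj_pow (a := g⁻¹) (b := x) (i := e)
  by_cases hxe : x ^ e = 1
  · rw [hconj, hxe, mul_one, inv_mul_cancel]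
  have hord := (hG.to_subgroup P).orderOf_eq_card_of_pow_ne_one hx hxe
  have hgen : zpowers x = P :=
    eq_of_le_of_card_ge (zpowers_le.mpr hx) (by rw [Nat.card_zpowers, hord])
  obtain ⟨a, ha⟩ := mem_zpowers_iff.mp (hgen ▸ hgx : g⁻¹ * x * g ∈ zpowers x)
  have hzp : (x ^ e) ^ p = 1 := by
    rw [← pow_mul, Nat.div_mul_cancel hpP, ← hord, pow_orderOf_eq_one]
  rw [hconj]
  refine hG.conj_eq_self_of_pow_prime_eq_one hzp (a := a) ?_
  rw [← hconj, ← ha, ← zpow_natCast, ← zpow_natCast, ← zpow_mul, ← zpow_mul, mul_comm]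

theorem pow_card_div_eq_one_of_conj_notMem (hG : IsPGroup p G)
    (hmax : ∀ P' : Subgroup G, P ≤ P' → IsCyclic P' → P' = P) {y g₀ : G}
    (hy : g₀⁻¹ * y * g₀ ∉ P) {k : ℕ} (hk : g₀⁻¹ * y ^ k * g₀ ∈ P) :
    (g₀⁻¹ * y ^ k * g₀) ^ (Nat.card P / p) = 1 := by
  by_contra hne
  set c := g₀⁻¹ * y * g₀
  have hck : c ^ k = g₀⁻¹ * y ^ k * g₀ := by
    simpa using conj_pow (a := g₀⁻¹) (b := y) (i := k)
  rw [← hck] at hk hne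
  have hgen : zpowers (c ^ k) = P := eq_of_le_of_card_ge (zpowers_le.mpr hk)
    (by rw [Nat.card_zpowers, (hG.to_subgroup P).orderOf_eq_card_of_pow_ne_one hk hne])
  have hPc : P ≤ zpowers c := hgen ▸ zpowers_le.mpr (pow_mem (mem_zpowers c) k)
  exact hy (hmax _ hPc inferInstance ▸ mem_zpowers c)

attribute [local instance] IsCyclic.commGroup

variable [IsCyclic P]

theorem transfer_pow_card_div_eq_one_of_mem (hG : IsPGroup p G) (hpP : p ∣ Nat.card P)
    (hP : P ≠ ⊤) {h : G} (hh : h ∈ P) :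
    (MonoidHom.transfer (MonoidHom.id P) h) ^ (Nat.card P / p) = 1 := by
  obtain ⟨n, hn⟩ := hG.index P
  have hpindex : p ∣ P.index := by
    rw [hn]
    refine dvd_pow_self p fun hn0 => hP (index_eq_one.mp ?_)
    rw [hn, hn0, pow_zero]
  obtain ⟨j, hj⟩ := hpindex
  rw [← powMonoidHom_apply, MonoidHom.map_transfer,
    MonoidHom.transfer_eq_pow_index_of_forall _ h (⟨h, hh⟩ ^ (Nat.card P / p)), hj, pow_mul,
    ← pow_mul _ _ p, Nat.div_mul_cancel hpP, pow_card_eq_one', one_pow]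
  intro k g₀ hk
  ext
  simp [hG.conj_pow_card_div_eq hpP (pow_mem hh k) hk, ← pow_mul, mul_comm]

theorem transfer_pow_card_div_eq_one (hG : IsPGroup p G) (hpP : p ∣ Nat.card P) (hP : P ≠ ⊤)
    (hmax : ∀ P' : Subgroup G, P ≤ P' → IsCyclic P' → P' = P) (y : G) :
    (MonoidHom.transfer (MonoidHom.id P) y) ^ (Nat.card P / p) = 1 := by
  by_cases hconj : ∃ g₀, g₀⁻¹ * y * g₀ ∈ P
  · obtain ⟨g₀, hg₀⟩ := hconj
    rw [← MonoidHom.map_conj_of_commGroup _ g₀]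
    exact hG.transfer_pow_card_div_eq_one_of_mem hpP hP hg₀
  push Not at hconj
  rw [← powMonoidHom_apply, MonoidHom.map_transfer,
    MonoidHom.transfer_eq_pow_index_of_forall _ y 1 fun k g₀ hk => ?_, one_pow]
  ext
  simpa using hG.pow_card_div_eq_one_of_conj_notMem hmax (hconj g₀) hk

end IsPGroup

/-- Let `N` be a finite `p`-group and `P ⪇ N` a cyclic subgroup that is maximal
among cyclic subgroups (it is not properly contained in any cyclic subgroup of
`N`).  Then the image of the transfer homomorphism `ver : N → P` is a proper
subgroup of `P`. -/
theorem stmt_8 (p : ℕ) (hp : p.Prime) (N : Type*) [Group N] [Fintype N]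
    (hN : IsPGroup p N) (P : Subgroup N) [hPc : IsCyclic ↥P] (hPne : P ≠ ⊤)
    (hmax : ∀ P' : Subgroup N, P ≤ P' → IsCyclic ↥P' → P' = P) :
    letI : CommGroup ↥P := IsCyclic.commGroup
    ¬ Function.Surjective (MonoidHom.transfer (MonoidHom.id ↥P)) := by
  have : Fact p.Prime := ⟨hp⟩
  intro hsurj
  have hbot : P ≠ ⊥ := by
    rintro rfl
    obtain ⟨x, -, hx⟩ := SetLike.exists_of_lt hPne.symm.bot_lt
    exact hx (hmax (zpowers x) bot_le inferInstance ▸ mem_zpowers x)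
  have hpP : p ∣ Nat.card P :=
    (hN.to_subgroup P).card_eq_or_dvd.resolve_left (card_eq_one.not.mpr hbot)
  obtain ⟨ζ, hζ⟩ := IsCyclic.exists_ofOrder_eq_natCard (α := P)
  obtain ⟨y, rfl⟩ := hsurj ζ
  refine pow_ne_one_of_lt_orderOf ?_ ?_ (hN.transfer_pow_card_div_eq_one hpP hPne hmax y)
  · exact (Nat.div_pos (Nat.le_of_dvd Nat.card_pos hpP) hp.pos).ne'
  · rw [hζ]
    exact Nat.div_lt_self Nat.card_pos hp.one_lt
end
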